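/- Let u be a smooth complex function on ℝ, λ ∈ ℂ with Re λ > 0 and Im λ > 0, and let η = (η₁, η₂) be a nowhere-vanishing smooth solution of the Kaup–Newell system η₁' = −iλ²η₁ + λuη₂, η₂' = iλ²η₂ − λ ū η₁. Then with G_λ(η) = d_{λ̄}(η)/d_λ(η) and S_λ(η) = 2i(λ²−λ̄²)η₁η̄₂/d_λ(η), where d_λ(η) = λ|η₁|² + λ̄|η₂|², the derivative of G_λ(η) satisfies the identity d/dx G_λ(η) = −(i/2) G_λ(η) ( |S_λ(η)|² − u G_λ(η) conj(S_λ(η)) − conj(u G_λ(η)) S_λ(η) ), and consequently |d/dx G_λ(η)(x)| ≤ 8(Im λ)² + 4 (Im λ)|u(x)| for all x. -/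

import Mathlib

open Complex

/-- `d_λ(η) = λ|η₁|² + λ̄|η₂|²`. -/
noncomputable def dLam (lam : ℂ) (η₁ η₂ : ℝ → ℂ) (x : ℝ) : ℂ :=
  lam * (‖η₁ x‖ ^ 2 : ℝ) + (starRingEnd ℂ) lam * (‖η₂ x‖ ^ 2 : ℝ)

/-- `G_λ(η) = d_{λ̄}(η)/d_λ(η)`. -/
noncomputable def Gfun (lam : ℂ) (η₁ η₂ : ℝ → ℂ) (x : ℝ) : ℂ :=
  dLam ((starRingEnd ℂ) lam) η₁ η₂ x / dLam lam η₁ η₂ x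

/-- `S_λ(η) = 2i(λ² − λ̄²) η₁ η̄₂ / d_λ(η)`. -/
noncomputable def Sfun (lam : ℂ) (η₁ η₂ : ℝ → ℂ) (x : ℝ) : ℂ :=
  2 * Complex.I * (lam ^ 2 - ((starRingEnd ℂ) lam) ^ 2) * η₁ x * (starRingEnd ℂ) (η₂ x) /
    dLam lam η₁ η₂ x

lemma normsq_cast (z : ℂ) : ((‖z‖^2 : ℝ) : ℂ) = z * (starRingEnd ℂ) z := by
  rw [Complex.mul_conj, Complex.normSq_eq_norm_sq]

lemma dlam_ne' (lam : ℂ) (hre : 0 < lam.re) (A B : ℂ) (h : ¬(A = 0 ∧ B = 0)) :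
    lam * (‖A‖ ^ 2 : ℝ) + (starRingEnd ℂ) lam * (‖B‖ ^ 2 : ℝ) ≠ 0 := by
  intro hz
  have hre' : (lam * (‖A‖ ^ 2 : ℝ) + (starRingEnd ℂ) lam * (‖B‖ ^ 2 : ℝ)).re
      = lam.re * (‖A‖^2 + ‖B‖^2) := by
    simp only [Complex.add_re, Complex.mul_re, Complex.conj_re, Complex.conj_im,
      Complex.ofReal_re, Complex.ofReal_im]
    ring
  have hAB : 0 < ‖A‖^2 + ‖B‖^2 := by
    rcases not_and_or.mp h with h | h
    · have := norm_pos_iff.mpr h; positivity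
    · have := norm_pos_iff.mpr h; positivity
  rw [hz] at hre'
  simp only [Complex.zero_re] at hre'
  nlinarith

lemma step2' (i K U V dd dc A a B b : ℂ) (hd : dd ≠ 0) (hdc : dc ≠ 0) :
    -(i/2) * (4*i*i*K^2 * A * a * B * b - 2*i*K * U * a * B * dc - 2*i*K * V * A * b * dd) / dd^2
    = -(i/2) * (dc/dd) *
        ((2*i*K*A*b/dd) * (2*i*K*a*B/dc) - U*(dc/dd)*(2*i*K*a*B/dc) - V*(dd/dc)*(2*i*K*A*b/dd)) := by
  field_simp
  ring

lemma dLam_prod (lam : ℂ) (η₁ η₂ : ℝ → ℂ) (t : ℝ) :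
    dLam lam η₁ η₂ t
      = lam * (η₁ t * (starRingEnd ℂ) (η₁ t)) + (starRingEnd ℂ) lam * (η₂ t * (starRingEnd ℂ) (η₂ t)) := by
  rw [dLam, normsq_cast, normsq_cast]

lemma dLam_conj (lam : ℂ) (η₁ η₂ : ℝ → ℂ) (t : ℝ) :
    dLam ((starRingEnd ℂ) lam) η₁ η₂ t = (starRingEnd ℂ) (dLam lam η₁ η₂ t) := by
  rw [dLam_prod, dLam_prod]
  simp only [map_add, map_mul, Complex.conj_conj]
  ring

set_option maxHeartbeats 2000000 in

/-- Let `u` be a smooth complex function, `Re λ > 0 < Im λ`, and `η = (η₁, η₂)` a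
nowhere-vanishing smooth solution of the Kaup–Newell system
`η₁' = −iλ²η₁ + λuη₂`, `η₂' = iλ²η₂ − λū η₁`. Then
`d/dx G_λ(η) = −(i/2) G_λ(η)(|S_λ(η)|² − u G_λ(η) conj S_λ(η) − conj(u G_λ(η)) S_λ(η))`
and consequently `|d/dx G_λ(η)(x)| ≤ 8(Im λ)² + 4(Im λ)|u(x)|` for all `x`. -/
theorem backlund_G_derivative (u : ℝ → ℂ) (hu : ContDiff ℝ (⊤ : ℕ∞) u)
    (lam : ℂ) (hre : 0 < lam.re) (him : 0 < lam.im)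
    (η₁ η₂ : ℝ → ℂ) (hη : ∀ x, ¬(η₁ x = 0 ∧ η₂ x = 0))
    (hsm₁ : ContDiff ℝ (⊤ : ℕ∞) η₁) (hsm₂ : ContDiff ℝ (⊤ : ℕ∞) η₂)
    (hode₁ : ∀ x, HasDerivAt η₁ (-Complex.I * lam ^ 2 * η₁ x + lam * u x * η₂ x) x)
    (hode₂ : ∀ x,
      HasDerivAt η₂ (Complex.I * lam ^ 2 * η₂ x - lam * (starRingEnd ℂ) (u x) * η₁ x) x) :
    ∀ x : ℝ,
      (HasDerivAt (Gfun lam η₁ η₂)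
        (-(Complex.I / 2) * Gfun lam η₁ η₂ x *
          ((‖Sfun lam η₁ η₂ x‖ ^ 2 : ℝ) -
            u x * Gfun lam η₁ η₂ x * (starRingEnd ℂ) (Sfun lam η₁ η₂ x) -
            (starRingEnd ℂ) (u x * Gfun lam η₁ η₂ x) * Sfun lam η₁ η₂ x)) x) ∧
      ‖deriv (Gfun lam η₁ η₂) x‖ ≤ 8 * lam.im ^ 2 + 4 * lam.im * ‖u x‖ := by
  intro x
  have hdx0 : dLam lam η₁ η₂ x ≠ 0 := by
    rw [dLam]; exact dlam_ne' lam hre _ _ (hη x)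
  have hd0 : (lam * (η₁ x * (starRingEnd ℂ) (η₁ x)) + (starRingEnd ℂ) lam * (η₂ x * (starRingEnd ℂ) (η₂ x))) ≠ 0 := by
    rw [← dLam_prod]; exact hdx0
  have hdc0 : ((starRingEnd ℂ) lam * (η₁ x * (starRingEnd ℂ) (η₁ x)) + lam * (η₂ x * (starRingEnd ℂ) (η₂ x))) ≠ 0 := by
    intro h
    apply hd0
    have h2 := congrArg (starRingEnd ℂ) h
    simp only [map_add, map_mul, Complex.conj_conj, map_zero] at h2
    rw [← h2]; ring
  -- derivative of d in product form
  have hD : HasDerivAt (fun t => lam * (η₁ t * (starRingEnd ℂ) (η₁ t))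
        + (starRingEnd ℂ) lam * (η₂ t * (starRingEnd ℂ) (η₂ t))) (lam * ((-Complex.I * lam ^ 2 * η₁ x + lam * u x * η₂ x) * (starRingEnd ℂ) (η₁ x) + η₁ x * (starRingEnd ℂ) ((-Complex.I * lam ^ 2 * η₁ x + lam * u x * η₂ x))) + (starRingEnd ℂ) lam * ((Complex.I * lam ^ 2 * η₂ x - lam * (starRingEnd ℂ) (u x) * η₁ x) * (starRingEnd ℂ) (η₂ x) + η₂ x * (starRingEnd ℂ) ((Complex.I * lam ^ 2 * η₂ x - lam * (starRingEnd ℂ) (u x) * η₁ x)))) x :=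
    (((hode₁ x).mul (hode₁ x).star).const_mul lam).add
      (((hode₂ x).mul (hode₂ x).star).const_mul ((starRingEnd ℂ) lam))
  have hDc : HasDerivAt (fun t => (starRingEnd ℂ) (lam * (η₁ t * (starRingEnd ℂ) (η₁ t))
        + (starRingEnd ℂ) lam * (η₂ t * (starRingEnd ℂ) (η₂ t)))) ((starRingEnd ℂ) ((lam * ((-Complex.I * lam ^ 2 * η₁ x + lam * u x * η₂ x) * (starRingEnd ℂ) (η₁ x) + η₁ x * (starRingEnd ℂ) ((-Complex.I * lam ^ 2 * η₁ x + lam * u x * η₂ x))) + (starRingEnd ℂ) lam * ((Complex.I * lam ^ 2 * η₂ x - lam * (starRingEnd ℂ) (u x) * η₁ x) * (starRingEnd ℂ) (η₂ x) + η₂ x * (starRingEnd ℂ) ((Complex.I * lam ^ 2 * η₂ x - lam * (starRingEnd ℂ) (u x) * η₁ x)))))) x := hD.star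
  have hGfun : Gfun lam η₁ η₂ = fun t =>
      (starRingEnd ℂ) (lam * (η₁ t * (starRingEnd ℂ) (η₁ t))
        + (starRingEnd ℂ) lam * (η₂ t * (starRingEnd ℂ) (η₂ t)))
      / (lam * (η₁ t * (starRingEnd ℂ) (η₁ t))
        + (starRingEnd ℂ) lam * (η₂ t * (starRingEnd ℂ) (η₂ t))) := by
    funext t
    rw [Gfun, dLam_conj, dLam_prod]
  have hG : HasDerivAt (Gfun lam η₁ η₂)
      (((starRingEnd ℂ) ((lam * ((-Complex.I * lam ^ 2 * η₁ x + lam * u x * η₂ x) * (starRingEnd ℂ) (η₁ x) + η₁ x * (starRingEnd ℂ) ((-Complex.I * lam ^ 2 * η₁ x + lam * u x * η₂ x))) + (starRingEnd ℂ) lam * ((Complex.I * lam ^ 2 * η₂ x - lam * (starRingEnd ℂ) (u x) * η₁ x) * (starRingEnd ℂ) (η₂ x) + η₂ x * (starRingEnd ℂ) ((Complex.I * lam ^ 2 * η₂ x - lam * (starRingEnd ℂ) (u x) * η₁ x))))) * (lam * (η₁ x * (starRingEnd ℂ) (η₁ x)) + (starRingEnd ℂ) lam * (η₂ x * (starRingEnd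 ℂ) (η₂ x))) - (starRingEnd ℂ) ((lam * (η₁ x * (starRingEnd ℂ) (η₁ x)) + (starRingEnd ℂ) lam * (η₂ x * (starRingEnd ℂ) (η₂ x)))) * (lam * ((-Complex.I * lam ^ 2 * η₁ x + lam * u x * η₂ x) * (starRingEnd ℂ) (η₁ x) + η₁ x * (starRingEnd ℂ) ((-Complex.I * lam ^ 2 * η₁ x + lam * u x * η₂ x))) + (starRingEnd ℂ) lam * ((Complex.I * lam ^ 2 * η₂ x - lam * (starRingEnd ℂ) (u x) * η₁ x) * (starRingEnd ℂ) (η₂ x) + η₂ x * (starRingEnd ℂ) ((Complex.I * lam ^ 2 * η₂ x - lam * (starRingEnd ℂ) (u x) * η₁ x))))) / (lam * (η₁ x * (starRingEnd ℂ) (η₁ x)) + (starRingEnd ℂ) lam * (η₂ x * (starRingEnd ℂ) (η₂ x))) ^ 2) x := by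
    rw [hGfun]
    exact hDc.div hD hd0
  -- numerator identity
  have hnum : (starRingEnd ℂ) ((lam * ((-Complex.I * lam ^ 2 * η₁ x + lam * u x * η₂ x) * (starRingEnd ℂ) (η₁ x) + η₁ x * (starRingEnd ℂ) ((-Complex.I * lam ^ 2 * η₁ x + lam * u x * η₂ x))) + (starRingEnd ℂ) lam * ((Complex.I * lam ^ 2 * η₂ x - lam * (starRingEnd ℂ) (u x) * η₁ x) * (starRingEnd ℂ) (η₂ x) + η₂ x * (starRingEnd ℂ) ((Complex.I * lam ^ 2 * η₂ x - lam * (starRingEnd ℂ) (u x) * η₁ x))))) * (lam * (η₁ x * (starRingEnd ℂ) (η₁ x)) + (starRingEnd ℂ) lam * (η₂ x * (starRingEnd ℂ) (η₂ x))) - (starRingEnd ℂ) ((lam * (η₁ x * (starRingEnd ℂ) (η₁ x)) + (starRingEnd ℂ) lam * (η₂ x * (starRingEnd ℂ) (η₂ x)))) * (lam * ((-Complex.I * lam ^ 2 * η₁ x + lam * u x * η₂ x) * (starRingEnd ℂ) (η₁ x) + η₁ x * (starRingEnd ℂ) ((-Complex.I * lam ^ 2 * η₁ x + lam * u x * η₂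 x))) + (starRingEnd ℂ) lam * ((Complex.I * lam ^ 2 * η₂ x - lam * (starRingEnd ℂ) (u x) * η₁ x) * (starRingEnd ℂ) (η₂ x) + η₂ x * (starRingEnd ℂ) ((Complex.I * lam ^ 2 * η₂ x - lam * (starRingEnd ℂ) (u x) * η₁ x))))
      = -(Complex.I/2) * (4*Complex.I*Complex.I*(lam ^ 2 - ((starRingEnd ℂ) lam) ^ 2)^2 * η₁ x * (starRingEnd ℂ) (η₁ x) * η₂ x * (starRingEnd ℂ) (η₂ x) - 2*Complex.I*(lam ^ 2 - ((starRingEnd ℂ) lam) ^ 2) * u x * (starRingEnd ℂ) (η₁ x) * η₂ x * ((starRingEnd ℂ) lam * (η₁ x * (starRingEnd ℂ) (η₁ x)) + lam * (η₂ x * (starRingEnd ℂ) (η₂ x))) - 2*Complex.I*(lam ^ 2 - ((starRingEnd ℂ) lam) ^ 2) * (starRingEnd ℂ) (u x) * η₁ x * (starRingEnd ℂ) (η₂ x) * (lam * (η₁ x * (starRingEnd ℂ) (η₁ x)) + (starRingEnd ℂ) lam * (η₂ x * (starRingEnd ℂ) (η₂ x)))) := by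
    simp only [map_mul, map_add, map_neg, map_sub, map_pow, Complex.conj_conj, Complex.conj_I]
    linear_combination ((-1)*lam^2*((starRingEnd ℂ) lam)*(u x)*(η₁ x)*((starRingEnd ℂ) (η₁ x))^2*(η₂ x) + (-1)*lam^3*(u x)*((starRingEnd ℂ) (η₁ x))*(η₂ x)^2*((starRingEnd ℂ) (η₂ x)) + ((starRingEnd ℂ) lam)^3*(u x)*(η₁ x)*((starRingEnd ℂ) (η₁ x))^2*(η₂ x) + lam*((starRingEnd ℂ) lam)^2*(u x)*((starRingEnd ℂ) (η₁ x))*(η₂ x)^2*((starRingEnd ℂ) (η₂ x)) + (-1)*lam^3*((starRingEnd ℂ) (u x))*(η₁ x)^2*((starRingEnd ℂ) (η₁ x))*((starRingEnd ℂ) (η₂ x)) + (-1)*lam^2*((starRingEnd ℂ) lam)*((starRingEnd ℂ) (u x))*(η₁ x)*(η₂ x)*((starRingEnd ℂ) (η₂ x))^2 + lam*((starRingEnd ℂ) lam)^2*((starRingEnd ℂ) (u x))*(η₁ x)^2*((starRingEnd ℂ) (η₁ x))*((starRingEnd ℂ) (η₂ x)) + ((starRingEnd ℂ) lam)^3*((starRingEnd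 ℂ) (u x))*(η₁ x)*(η₂ x)*((starRingEnd ℂ) (η₂ x))^2 + 2*Complex.I*lam^4*(η₁ x)*((starRingEnd ℂ) (η₁ x))*(η₂ x)*((starRingEnd ℂ) (η₂ x)) + (-4)*Complex.I*lam^2*((starRingEnd ℂ) lam)^2*(η₁ x)*((starRingEnd ℂ) (η₁ x))*(η₂ x)*((starRingEnd ℂ) (η₂ x)) + 2*Complex.I*((starRingEnd ℂ) lam)^4*(η₁ x)*((starRingEnd ℂ) (η₁ x))*(η₂ x)*((starRingEnd ℂ) (η₂ x))) * Complex.I_sq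
  have hstep2 : -(Complex.I/2) * (4*Complex.I*Complex.I*(lam ^ 2 - ((starRingEnd ℂ) lam) ^ 2)^2 * η₁ x * (starRingEnd ℂ) (η₁ x) * η₂ x * (starRingEnd ℂ) (η₂ x) - 2*Complex.I*(lam ^ 2 - ((starRingEnd ℂ) lam) ^ 2) * u x * (starRingEnd ℂ) (η₁ x) * η₂ x * ((starRingEnd ℂ) lam * (η₁ x * (starRingEnd ℂ) (η₁ x)) + lam * (η₂ x * (starRingEnd ℂ) (η₂ x))) - 2*Complex.I*(lam ^ 2 - ((starRingEnd ℂ) lam) ^ 2) * (starRingEnd ℂ) (u x) * η₁ x * (starRingEnd ℂ) (η₂ x) * (lam * (η₁ x * (starRingEnd ℂ) (η₁ x)) + (starRingEnd ℂ) lam * (η₂ x * (starRingEnd ℂ) (η₂ x)))) / (lam * (η₁ x * (starRingEnd ℂ) (η₁ x)) + (starRingEnd ℂ) lam * (η₂ x * (starRingEnd ℂ) (η₂ x)))^2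
      = -(Complex.I/2) * (((starRingEnd ℂ) lam * (η₁ x * (starRingEnd ℂ) (η₁ x)) + lam * (η₂ x * (starRingEnd ℂ) (η₂ x)))/(lam * (η₁ x * (starRingEnd ℂ) (η₁ x)) + (starRingEnd ℂ) lam * (η₂ x * (starRingEnd ℂ) (η₂ x)))) *
          ((2*Complex.I*(lam ^ 2 - ((starRingEnd ℂ) lam) ^ 2)*η₁ x*(starRingEnd ℂ) (η₂ x)/(lam * (η₁ x * (starRingEnd ℂ) (η₁ x)) + (starRingEnd ℂ) lam * (η₂ x * (starRingEnd ℂ) (η₂ x)))) * (2*Complex.I*(lam ^ 2 - ((starRingEnd ℂ) lam) ^ 2)*(starRingEnd ℂ) (η₁ x)*η₂ x/((starRingEnd ℂ) lam * (η₁ x * (starRingEnd ℂ) (η₁ x)) + lam * (η₂ x * (starRingEnd ℂ) (η₂ x)))) - (u x)*(((starRingEnd ℂ) lam * (η₁ x * (starRingEnd ℂ) (η₁ x)) + lam * (η₂ x * (starRingEnd ℂ) (η₂ x)))/(lam * (η₁ x * (starRingEnd ℂ) (η₁ x)) + (starRingEnd ℂ) lam * (η₂ x * (starRingEnd ℂ)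 (η₂ x))))*(2*Complex.I*(lam ^ 2 - ((starRingEnd ℂ) lam) ^ 2)*(starRingEnd ℂ) (η₁ x)*η₂ x/((starRingEnd ℂ) lam * (η₁ x * (starRingEnd ℂ) (η₁ x)) + lam * (η₂ x * (starRingEnd ℂ) (η₂ x)))) - ((starRingEnd ℂ) (u x))*((lam * (η₁ x * (starRingEnd ℂ) (η₁ x)) + (starRingEnd ℂ) lam * (η₂ x * (starRingEnd ℂ) (η₂ x)))/((starRingEnd ℂ) lam * (η₁ x * (starRingEnd ℂ) (η₁ x)) + lam * (η₂ x * (starRingEnd ℂ) (η₂ x))))*(2*Complex.I*(lam ^ 2 - ((starRingEnd ℂ) lam) ^ 2)*η₁ x*(starRingEnd ℂ) (η₂ x)/(lam * (η₁ x * (starRingEnd ℂ) (η₁ x)) + (starRingEnd ℂ) lam * (η₂ x * (starRingEnd ℂ) (η₂ x))))) :=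
    step2' Complex.I (lam ^ 2 - ((starRingEnd ℂ) lam) ^ 2) (u x) ((starRingEnd ℂ) (u x)) (lam * (η₁ x * (starRingEnd ℂ) (η₁ x)) + (starRingEnd ℂ) lam * (η₂ x * (starRingEnd ℂ) (η₂ x))) ((starRingEnd ℂ) lam * (η₁ x * (starRingEnd ℂ) (η₁ x)) + lam * (η₂ x * (starRingEnd ℂ) (η₂ x))) (η₁ x) ((starRingEnd ℂ) (η₁ x)) (η₂ x) ((starRingEnd ℂ) (η₂ x)) hd0 hdc0
  -- identification with Gfun/Sfun form
  have hGx : Gfun lam η₁ η₂ x = (((starRingEnd ℂ) lam * (η₁ x * (starRingEnd ℂ) (η₁ x)) + lam * (η₂ x * (starRingEnd ℂ) (η₂ x)))/(lam * (η₁ x * (starRingEnd ℂ) (η₁ x)) + (starRingEnd ℂ) lam * (η₂ x * (starRingEnd ℂ) (η₂ x)))) := by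
    rw [Gfun, dLam_conj, dLam_prod]
    simp only [map_add, map_mul, Complex.conj_conj]
    ring
  have hSx : Sfun lam η₁ η₂ x = (2*Complex.I*(lam ^ 2 - ((starRingEnd ℂ) lam) ^ 2)*η₁ x*(starRingEnd ℂ) (η₂ x)/(lam * (η₁ x * (starRingEnd ℂ) (η₁ x)) + (starRingEnd ℂ) lam * (η₂ x * (starRingEnd ℂ) (η₂ x)))) := by
    rw [Sfun, dLam_prod]
  have hcS : (starRingEnd ℂ) (Sfun lam η₁ η₂ x) = (2*Complex.I*(lam ^ 2 - ((starRingEnd ℂ) lam) ^ 2)*(starRingEnd ℂ) (η₁ x)*η₂ x/((starRingEnd ℂ) lam * (η₁ x * (starRingEnd ℂ) (η₁ x)) + lam * (η₂ x * (starRingEnd ℂ) (η₂ x)))) := by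
    rw [hSx]
    simp only [map_div₀, map_mul, map_add, map_sub, map_pow, Complex.conj_conj,
      Complex.conj_I, map_ofNat]
    ring
  have hcG : (starRingEnd ℂ) (Gfun lam η₁ η₂ x) = ((lam * (η₁ x * (starRingEnd ℂ) (η₁ x)) + (starRingEnd ℂ) lam * (η₂ x * (starRingEnd ℂ) (η₂ x)))/((starRingEnd ℂ) lam * (η₁ x * (starRingEnd ℂ) (η₁ x)) + lam * (η₂ x * (starRingEnd ℂ) (η₂ x)))) := by
    rw [hGx]
    simp only [map_div₀, map_add, map_mul, Complex.conj_conj]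
    ring
  have hT : -(Complex.I / 2) * Gfun lam η₁ η₂ x *
          ((‖Sfun lam η₁ η₂ x‖ ^ 2 : ℝ) -
            u x * Gfun lam η₁ η₂ x * (starRingEnd ℂ) (Sfun lam η₁ η₂ x) -
            (starRingEnd ℂ) (u x * Gfun lam η₁ η₂ x) * Sfun lam η₁ η₂ x)
      = -(Complex.I/2) * (((starRingEnd ℂ) lam * (η₁ x * (starRingEnd ℂ) (η₁ x)) + lam * (η₂ x * (starRingEnd ℂ) (η₂ x)))/(lam * (η₁ x * (starRingEnd ℂ) (η₁ x)) + (starRingEnd ℂ) lam * (η₂ x * (starRingEnd ℂ) (η₂ x)))) *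
          ((2*Complex.I*(lam ^ 2 - ((starRingEnd ℂ) lam) ^ 2)*η₁ x*(starRingEnd ℂ) (η₂ x)/(lam * (η₁ x * (starRingEnd ℂ) (η₁ x)) + (starRingEnd ℂ) lam * (η₂ x * (starRingEnd ℂ) (η₂ x)))) * (2*Complex.I*(lam ^ 2 - ((starRingEnd ℂ) lam) ^ 2)*(starRingEnd ℂ) (η₁ x)*η₂ x/((starRingEnd ℂ) lam * (η₁ x * (starRingEnd ℂ) (η₁ x)) + lam * (η₂ x * (starRingEnd ℂ) (η₂ x)))) - (u x)*(((starRingEnd ℂ) lam * (η₁ x * (starRingEnd ℂ) (η₁ x)) + lam * (η₂ x * (starRingEnd ℂ) (η₂ x)))/(lam * (η₁ x * (starRingEnd ℂ) (η₁ x)) + (starRingEnd ℂ) lam * (η₂ x * (starRingEnd ℂ) (η₂ x))))*(2*Complex.I*(lam ^ 2 - ((starRingEnd ℂ) lam) ^ 2)*(starRingEnd ℂ) (η₁ x)*η₂ x/((starRingEnd ℂ) lam * (η₁ x * (starRingEnd ℂ) (η₁ x)) + lam * (η₂ x * (starRingEnd ℂ) (η₂ x)))) - ((starRingEnd ℂ)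 (u x))*((lam * (η₁ x * (starRingEnd ℂ) (η₁ x)) + (starRingEnd ℂ) lam * (η₂ x * (starRingEnd ℂ) (η₂ x)))/((starRingEnd ℂ) lam * (η₁ x * (starRingEnd ℂ) (η₁ x)) + lam * (η₂ x * (starRingEnd ℂ) (η₂ x))))*(2*Complex.I*(lam ^ 2 - ((starRingEnd ℂ) lam) ^ 2)*η₁ x*(starRingEnd ℂ) (η₂ x)/(lam * (η₁ x * (starRingEnd ℂ) (η₁ x)) + (starRingEnd ℂ) lam * (η₂ x * (starRingEnd ℂ) (η₂ x))))) := by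
    rw [normsq_cast, map_mul, hcS, hcG, hGx, hSx]
  have hGmain : HasDerivAt (Gfun lam η₁ η₂)
      (-(Complex.I / 2) * Gfun lam η₁ η₂ x *
          ((‖Sfun lam η₁ η₂ x‖ ^ 2 : ℝ) -
            u x * Gfun lam η₁ η₂ x * (starRingEnd ℂ) (Sfun lam η₁ η₂ x) -
            (starRingEnd ℂ) (u x * Gfun lam η₁ η₂ x) * Sfun lam η₁ η₂ x)) x := by
    have e : ((starRingEnd ℂ) ((lam * ((-Complex.I * lam ^ 2 * η₁ x + lam * u x * η₂ x) * (starRingEnd ℂ) (η₁ x) + η₁ x * (starRingEnd ℂ) ((-Complex.I * lam ^ 2 * η₁ x + lam * u x * η₂ x))) + (starRingEnd ℂ) lam * ((Complex.I * lam ^ 2 * η₂ x - lam * (starRingEnd ℂ) (u x) * η₁ x) * (starRingEnd ℂ) (η₂ x) + η₂ x * (starRingEnd ℂ) ((Complex.I * lam ^ 2 * η₂ x - lam * (starRingEnd ℂ) (u x) * η₁ x))))) * (lam * (η₁ x * (starRingEnd ℂ) (η₁ x)) + (starRingEnd ℂ) lam * (η₂ x * (starRingEnd ℂ) (η₂ x)))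 - (starRingEnd ℂ) ((lam * (η₁ x * (starRingEnd ℂ) (η₁ x)) + (starRingEnd ℂ) lam * (η₂ x * (starRingEnd ℂ) (η₂ x)))) * (lam * ((-Complex.I * lam ^ 2 * η₁ x + lam * u x * η₂ x) * (starRingEnd ℂ) (η₁ x) + η₁ x * (starRingEnd ℂ) ((-Complex.I * lam ^ 2 * η₁ x + lam * u x * η₂ x))) + (starRingEnd ℂ) lam * ((Complex.I * lam ^ 2 * η₂ x - lam * (starRingEnd ℂ) (u x) * η₁ x) * (starRingEnd ℂ) (η₂ x) + η₂ x * (starRingEnd ℂ) ((Complex.I * lam ^ 2 * η₂ x - lam * (starRingEnd ℂ) (u x) * η₁ x))))) / (lam * (η₁ x * (starRingEnd ℂ) (η₁ x)) + (starRingEnd ℂ) lam * (η₂ x * (starRingEnd ℂ) (η₂ x))) ^ 2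
        = -(Complex.I / 2) * Gfun lam η₁ η₂ x *
          ((‖Sfun lam η₁ η₂ x‖ ^ 2 : ℝ) -
            u x * Gfun lam η₁ η₂ x * (starRingEnd ℂ) (Sfun lam η₁ η₂ x) -
            (starRingEnd ℂ) (u x * Gfun lam η₁ η₂ x) * Sfun lam η₁ η₂ x) := by
      rw [hnum, hstep2, ← hT]
    exact e ▸ hG
  refine ⟨hGmain, ?_⟩
  rw [hGmain.deriv]
  -- norm bound
  have hG1 : ‖Gfun lam η₁ η₂ x‖ = 1 := by
    rw [Gfun, dLam_conj, norm_div, RCLike.norm_conj, div_self (norm_ne_zero_iff.mpr hdx0)]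
  have hdre : (dLam lam η₁ η₂ x).re = lam.re * (‖η₁ x‖^2 + ‖η₂ x‖^2) := by
    rw [dLam]
    simp only [Complex.add_re, Complex.mul_re, Complex.conj_re, Complex.conj_im,
      Complex.ofReal_re, Complex.ofReal_im]
    ring
  have hdlow : lam.re * (‖η₁ x‖^2 + ‖η₂ x‖^2) ≤ ‖dLam lam η₁ η₂ x‖ := by
    rw [← hdre]; exact Complex.re_le_norm _
  have hK : lam^2 - ((starRingEnd ℂ) lam)^2
      = ((2*lam.re : ℝ) : ℂ) * (((2*lam.im : ℝ) : ℂ) * Complex.I) := by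
    have h1 := Complex.add_conj lam
    have h2 := Complex.sub_conj lam
    calc lam^2 - ((starRingEnd ℂ) lam)^2
        = (lam + (starRingEnd ℂ) lam) * (lam - (starRingEnd ℂ) lam) := by ring
    _ = _ := by rw [h1, h2]
  have hSnorm : ‖Sfun lam η₁ η₂ x‖ ≤ 4 * lam.im := by
    rw [Sfun, norm_div]
    have hdpos : 0 < ‖dLam lam η₁ η₂ x‖ := norm_pos_iff.mpr hdx0
    rw [div_le_iff₀ hdpos]
    have hnn : ‖2 * Complex.I * (lam ^ 2 - ((starRingEnd ℂ) lam) ^ 2) * η₁ x * (starRingEnd ℂ) (η₂ x)‖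
        = 8 * lam.re * lam.im * (‖η₁ x‖ * ‖η₂ x‖) := by
      rw [hK]
      have a1 : |2*lam.re| = 2*lam.re := _root_.abs_of_nonneg (by linarith)
      have a2 : |2*lam.im| = 2*lam.im := _root_.abs_of_nonneg (by linarith)
      simp only [norm_mul, Complex.norm_I, Complex.norm_real, RCLike.norm_conj, a1, a2]
      norm_num
      simp only [_root_.abs_of_nonneg hre.le, _root_.abs_of_nonneg him.le]
      ring
    rw [hnn]
    nlinarith [sq_nonneg (‖η₁ x‖ - ‖η₂ x‖), norm_nonneg (η₁ x), norm_nonneg (η₂ x),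
      mul_le_mul_of_nonneg_left hdlow (by linarith : (0:ℝ) ≤ 4*lam.im),
      mul_pos hre him]
  have e1 : ‖((‖Sfun lam η₁ η₂ x‖ ^ 2 : ℝ) : ℂ)‖ = ‖Sfun lam η₁ η₂ x‖^2 := by
    rw [Complex.norm_real, Real.norm_of_nonneg (by positivity)]
  have e2 : ‖u x * Gfun lam η₁ η₂ x * (starRingEnd ℂ) (Sfun lam η₁ η₂ x)‖
      = ‖u x‖ * ‖Sfun lam η₁ η₂ x‖ := by
    rw [norm_mul, norm_mul, hG1, RCLike.norm_conj]; ring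
  have e3 : ‖(starRingEnd ℂ) (u x * Gfun lam η₁ η₂ x) * Sfun lam η₁ η₂ x‖
      = ‖u x‖ * ‖Sfun lam η₁ η₂ x‖ := by
    rw [norm_mul, RCLike.norm_conj, norm_mul, hG1]; ring
  have hEb : ‖((‖Sfun lam η₁ η₂ x‖ ^ 2 : ℝ) : ℂ) -
        u x * Gfun lam η₁ η₂ x * (starRingEnd ℂ) (Sfun lam η₁ η₂ x) -
        (starRingEnd ℂ) (u x * Gfun lam η₁ η₂ x) * Sfun lam η₁ η₂ x‖
      ≤ ‖Sfun lam η₁ η₂ x‖^2 + ‖u x‖ * ‖Sfun lam η₁ η₂ x‖ + ‖u x‖ * ‖Sfun lam η₁ η₂ x‖ := by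
    refine (norm_sub_le _ _).trans ?_
    rw [e3]
    refine add_le_add_left ((norm_sub_le _ _).trans ?_) _
    rw [e1, e2]
  have habs : ‖-(Complex.I / 2) * Gfun lam η₁ η₂ x *
      (((‖Sfun lam η₁ η₂ x‖ ^ 2 : ℝ) : ℂ) -
        u x * Gfun lam η₁ η₂ x * (starRingEnd ℂ) (Sfun lam η₁ η₂ x) -
        (starRingEnd ℂ) (u x * Gfun lam η₁ η₂ x) * Sfun lam η₁ η₂ x)‖
      = (1/2) * ‖((‖Sfun lam η₁ η₂ x‖ ^ 2 : ℝ) : ℂ) -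
        u x * Gfun lam η₁ η₂ x * (starRingEnd ℂ) (Sfun lam η₁ η₂ x) -
        (starRingEnd ℂ) (u x * Gfun lam η₁ η₂ x) * Sfun lam η₁ η₂ x‖ := by
    rw [norm_mul, norm_mul, hG1]
    norm_num
  rw [habs]
  have hSnn : (0:ℝ) ≤ ‖Sfun lam η₁ η₂ x‖ := norm_nonneg _
  nlinarith [hEb, hSnorm, hSnn, norm_nonneg (u x), him,
    mul_le_mul hSnorm hSnorm hSnn (by linarith),
    mul_le_mul_of_nonneg_left hSnorm (norm_nonneg (u x))]
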